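/- arXiv:1712.10253 — 7 statements merged into one kernel-verified Lean document; each statement's English description precedes it below -/
import Mathlib

section
/- Let h : ℝ → ℝ be continuous and nonincreasing (i.e. (h(y) − h(y'))·(y − y') ≤ 0 for all y, y'). Let ς : ℝ → ℝ≥0 be continuous with support contained in [−1,1] and ∫ ς = 1, and set ςₙ(u) := n·ς(n·u). Let Θ : ℝ → [0,1] be continuous with Θ(u) = 1 for |u| ≤ n+1. Define gₙ(y) := ∫_ℝ ςₙ(y − u)·Θ(u)·h(u) du. Then for all y, y' with |y| ≤ n and |y'| ≤ n one has (gₙ(y) − gₙ(y'))·(y − y') ≤ 0, i.e. the mollified truncated function is nonincreasing on the ball of radius n. -/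
open MeasureTheory

/-- Local monotonicity of the mollified truncated generator. -/
theorem mollified_truncation_local_monotone (n : ℕ) (hn : 1 ≤ n)
    (h ς Θ : ℝ → ℝ)
    (hh : Continuous h) (hmono : ∀ y y', (h y - h y') * (y - y') ≤ 0)
    (hςc : Continuous ς) (hςpos : ∀ u, 0 ≤ ς u)
    (hςsupp : Function.support ς ⊆ Set.Icc (-1) 1)
    (hςint : ∫ u, ς u = 1)
    (hΘc : Continuous Θ) (hΘ01 : ∀ u, Θ u ∈ Set.Icc (0 : ℝ) 1)
    (hΘ1 : ∀ u : ℝ, |u| ≤ (n : ℝ) + 1 → Θ u = 1)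
    (g : ℝ → ℝ)
    (hg : ∀ y, g y = ∫ u, (n : ℝ) * ς ((n : ℝ) * (y - u)) * Θ u * h u) :
    ∀ y y' : ℝ, |y| ≤ n → |y'| ≤ n → (g y - g y') * (y - y') ≤ 0 := by
  have hn0 : (0 : ℝ) < n := by exact_mod_cast Nat.lt_of_lt_of_le Nat.zero_lt_one hn
  have hn1 : (1 : ℝ) ≤ n := by exact_mod_cast hn
  -- compact support of ς
  have hςcs : HasCompactSupport ς :=
    HasCompactSupport.intro isCompact_Icc (fun x hx => by
      by_contra hne
      exact hx (hςsupp hne))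
  -- integrability of the mollified integrands
  have hint : ∀ z : ℝ, Integrable (fun w : ℝ => ς w * h (z - w / n)) := by
    intro z
    exact Continuous.integrable_of_hasCompactSupport
      (hςc.mul (hh.comp (by continuity))) hςcs.mul_right
  -- key formula: for |y| ≤ n, g y = ∫ w, ς w * h (y - w / n)
  have key : ∀ y : ℝ, |y| ≤ n → g y = ∫ w, ς w * h (y - w / n) := by
    intro y hy
    set F : ℝ → ℝ := fun w => (n : ℝ) * ς w * h (y - w / n) with hF
    have step1 : (∫ u : ℝ, (n : ℝ) * ς ((n : ℝ) * (y - u)) * Θ u * h u)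
        = ∫ u : ℝ, F ((n : ℝ) * (y - u)) := by
      congr 1
      funext u
      simp only [hF]
      by_cases hz : ς ((n : ℝ) * (y - u)) = 0
      · rw [hz]; ring
      · have hmem := hςsupp hz
        have habs : |(n : ℝ) * (y - u)| ≤ 1 := abs_le.mpr ⟨hmem.1, hmem.2⟩
        have h1 : |y - u| ≤ 1 := by
          calc |y - u| ≤ (n : ℝ) * |y - u| := le_mul_of_one_le_left (abs_nonneg _) hn1
            _ = |(n : ℝ) * (y - u)| := by rw [abs_mul, abs_of_pos hn0]
            _ ≤ 1 := habs
        have hu : |u| ≤ (n : ℝ) + 1 := by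
          have h2 : |u| - |y| ≤ |u - y| := abs_sub_abs_le_abs_sub u y
          have h3 : |u - y| = |y - u| := abs_sub_comm u y
          linarith
        rw [hΘ1 u hu]
        have hyu : y - (n : ℝ) * (y - u) / n = u := by field_simp; ring
        rw [hyu]; ring
    have step2 : (∫ u : ℝ, F ((n : ℝ) * (y - u)))
        = ∫ u : ℝ, (fun v : ℝ => F ((n : ℝ) * y - v)) ((n : ℝ) * u) := by
      congr 1; funext u; simp only []; ring_nf
    have step3 : (∫ u : ℝ, (fun v : ℝ => F ((n : ℝ) * y - v)) ((n : ℝ) * u))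
        = |((n : ℝ))⁻¹| • ∫ v : ℝ, F ((n : ℝ) * y - v) :=
      Measure.integral_comp_mul_left (fun v : ℝ => F ((n : ℝ) * y - v)) (n : ℝ)
    have step4 : (∫ v : ℝ, F ((n : ℝ) * y - v)) = ∫ v : ℝ, F v :=
      integral_sub_left_eq_self F (volume : Measure ℝ) ((n : ℝ) * y)
    have step5 : (∫ v : ℝ, F v) = (n : ℝ) * ∫ w, ς w * h (y - w / n) := by
      rw [← integral_const_mul]
      congr 1; funext w; simp only [hF]; ring
    rw [hg y, step1, step2, step3, step4, step5, smul_eq_mul,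
      abs_of_pos (inv_pos.mpr hn0)]
    field_simp
  intro y y' hy hy'
  rw [key y hy, key y' hy',
    ← integral_sub (hint y) (hint y'), ← integral_mul_const]
  refine integral_nonpos fun w => ?_
  have hm := hmono (y - w / n) (y' - w / n)
  have hsub : y - w / n - (y' - w / n) = y - y' := by ring
  rw [hsub] at hm
  have := mul_nonpos_of_nonneg_of_nonpos (hςpos w) hm
  calc (ς w * h (y - w / n) - ς w * h (y' - w / n)) * (y - y')
      = ς w * ((h (y - w / n) - h (y' - w / n)) * (y - y')) := by ring
    _ ≤ 0 := this
end

section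
/- Let T > 0, 𝔮 > 1, ϑ := 𝔮/(𝔮−1), η₀ > 0, and let b : [0,T] → ℝ be continuous. Define η(t) := η₀·exp(∫₀ᵗ b(r) dr), A(t) := exp((𝔮−1)·∫₀ᵗ b(r) dr), φ(t) := A(t)·∫ₜᵀ A(s)⁻¹ ds, and y(t) := η(t)·φ(t)^{1−ϑ} for t ∈ [0,T). Then y is differentiable on [0,T) and satisfies y'(t) = y(t)^𝔮/((𝔮−1)·η(t)^{𝔮−1}) for all t ∈ [0,T), together with y(t) → +∞ as t → T⁻. -/
open intervalIntegral

/-- Explicit solution of the deterministic singular equation with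
`η(t) = η₀ exp(∫₀ᵗ b)`. -/
theorem explicit_singular_solution_drift (T q ϑ η₀ : ℝ)
    (hT : 0 < T) (hq : 1 < q) (hϑ : ϑ = q / (q - 1)) (hη₀ : 0 < η₀)
    (b : ℝ → ℝ) (hb : ContinuousOn b (Set.Icc 0 T))
    (A η φ y : ℝ → ℝ)
    (hA : ∀ t, A t = Real.exp ((q - 1) * ∫ r in (0 : ℝ)..t, b r))
    (hη : ∀ t, η t = η₀ * Real.exp (∫ r in (0 : ℝ)..t, b r))
    (hφ : ∀ t, φ t = A t * ∫ s in t..T, (A s)⁻¹)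
    (hy : ∀ t, y t = η t * φ t ^ (1 - ϑ)) :
    (∀ t ∈ Set.Ico (0 : ℝ) T,
      HasDerivAt y (y t ^ q / ((q - 1) * η t ^ (q - 1))) t) ∧
    Filter.Tendsto y (nhdsWithin T (Set.Iio T)) Filter.atTop := by
  have hq1 : (0:ℝ) < q - 1 := by linarith
  have hq1' : q - 1 ≠ 0 := ne_of_gt hq1
  have hApos : ∀ s, 0 < A s := fun s => by rw [hA]; exact Real.exp_pos _
  have hbi : IntervalIntegrable b MeasureTheory.volume 0 T :=
    ContinuousOn.intervalIntegrable (by rwa [Set.uIcc_of_le hT.le])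
  have hBP : ContinuousOn (fun x => ∫ r in (0:ℝ)..x, b r) (Set.Icc 0 T) := by
    have := intervalIntegral.continuousOn_primitive_interval' hbi
      (by rw [Set.uIcc_of_le hT.le]; exact Set.left_mem_Icc.2 hT.le)
    rwa [Set.uIcc_of_le hT.le] at this
  -- continuity of the primitive on a slightly larger interval `[u, T]` with `u < 0`
  have hBext : ∃ u : ℝ, u < 0 ∧ ContinuousOn (fun x => ∫ r in (0:ℝ)..x, b r) (Set.Icc u T) := by
    by_cases hcase : ∃ u : ℝ, u < 0 ∧ IntervalIntegrable b MeasureTheory.volume u 0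
    · obtain ⟨u, hu, hint⟩ := hcase
      refine ⟨u, hu, ?_⟩
      have hbu : IntervalIntegrable b MeasureTheory.volume u T := hint.trans hbi
      have h0 : (0:ℝ) ∈ Set.uIcc u T := by
        rw [Set.uIcc_of_le (hu.le.trans hT.le)]
        exact ⟨hu.le, hT.le⟩
      have := intervalIntegral.continuousOn_primitive_interval' hbu h0
      rwa [Set.uIcc_of_le (hu.le.trans hT.le)] at this
    · push_neg at hcase
      refine ⟨-1, by norm_num, ?_⟩
      have hBeq : ∀ x ∈ Set.Icc (-1:ℝ) T,
          (∫ r in (0:ℝ)..x, b r) = (fun z => ∫ r in (0:ℝ)..z, b r) (max x 0) := by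
        intro x hx
        rcases le_or_gt 0 x with h | h
        · simp [max_eq_left h]
        · have h1 : ¬ IntervalIntegrable b MeasureTheory.volume x 0 := hcase x h
          have h2 : ¬ IntervalIntegrable b MeasureTheory.volume 0 x := fun h' => h1 h'.symm
          simp only [max_eq_right h.le]
          rw [intervalIntegral.integral_undef h2, intervalIntegral.integral_same]
      refine ContinuousOn.congr
        (hBP.comp (continuous_id.max continuous_const).continuousOn ?_) hBeq
      intro x hx
      exact ⟨le_max_right _ _, max_le hx.2 hT.le⟩
  obtain ⟨u, hu0, hBu⟩ := hBext
  -- continuity of `s ↦ (A s)⁻¹` on `[u, T]`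
  have h1 : ContinuousOn (fun s => (Real.exp ((q - 1) * ∫ r in (0:ℝ)..s, b r))⁻¹)
      (Set.Icc u T) :=
    (Real.continuous_exp.comp_continuousOn (continuousOn_const.mul hBu)).inv₀
      fun x _ => (Real.exp_pos _).ne'
  have hgu : ContinuousOn (fun s => (A s)⁻¹) (Set.Icc u T) :=
    h1.congr fun x _ => by rw [hA x]
  have hgint : ∀ t ∈ Set.Icc (0:ℝ) T,
      IntervalIntegrable (fun s => (A s)⁻¹) MeasureTheory.volume t T := by
    intro t ht
    apply ContinuousOn.intervalIntegrable
    apply hgu.mono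
    rw [Set.uIcc_of_le ht.2]
    exact Set.Icc_subset_Icc (hu0.le.trans ht.1) le_rfl
  have hIpos : ∀ t ∈ Set.Ico (0:ℝ) T, 0 < ∫ s in t..T, (A s)⁻¹ := fun t ht =>
    intervalIntegral.intervalIntegral_pos_of_pos_on (hgint t ⟨ht.1, ht.2.le⟩)
      (fun x _ => inv_pos.2 (hApos x)) ht.2
  have hInn : ∀ t, t ≤ T → 0 ≤ ∫ s in t..T, (A s)⁻¹ := fun t ht =>
    intervalIntegral.integral_nonneg ht fun s _ => (inv_pos.2 (hApos s)).le
  -- key identity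
  have hkey : ∀ t, t ≤ T → y t = η₀ * (∫ s in t..T, (A s)⁻¹) ^ (1 - ϑ) := by
    intro t ht
    have hIt := hInn t ht
    rw [hy, hη, hφ, Real.mul_rpow (hApos t).le hIt, hA, ← Real.exp_mul]
    have h1 : Real.exp (∫ r in (0:ℝ)..t, b r) *
        Real.exp ((q - 1) * (∫ r in (0:ℝ)..t, b r) * (1 - ϑ)) = 1 := by
      rw [← Real.exp_add, show (∫ r in (0:ℝ)..t, b r) +
        (q - 1) * (∫ r in (0:ℝ)..t, b r) * (1 - ϑ) = 0 by rw [hϑ]; field_simp; ring,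
        Real.exp_zero]
    linear_combination η₀ * (∫ s in t..T, (A s)⁻¹) ^ (1 - ϑ) * h1
  constructor
  · rintro t ⟨ht0, htT⟩
    have hmem : Set.Icc u T ∈ nhds t := Icc_mem_nhds (lt_of_lt_of_le hu0 ht0) htT
    have hca : ContinuousAt (fun s => (A s)⁻¹) t := hgu.continuousAt hmem
    have hmeas : StronglyMeasurableAtFilter (fun s => (A s)⁻¹) (nhds t)
        MeasureTheory.volume :=
      ⟨_, hmem, hgu.aestronglyMeasurable measurableSet_Icc⟩
    have hIder : HasDerivAt (fun x => ∫ s in x..T, (A s)⁻¹) (-(A t)⁻¹) t :=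
      intervalIntegral.integral_hasDerivAt_left (hgint t ⟨ht0, htT.le⟩) hmeas hca
    have hIt : 0 < ∫ s in t..T, (A s)⁻¹ := hIpos t ⟨ht0, htT⟩
    have hfder : HasDerivAt (fun x => η₀ * (∫ s in x..T, (A s)⁻¹) ^ (1 - ϑ))
        (η₀ * (-(A t)⁻¹ * (1 - ϑ) * (∫ s in t..T, (A s)⁻¹) ^ (1 - ϑ - 1))) t :=
      (hIder.rpow_const (Or.inl hIt.ne')).const_mul η₀
    have hyd : HasDerivAt y
        (η₀ * (-(A t)⁻¹ * (1 - ϑ) * (∫ s in t..T, (A s)⁻¹) ^ (1 - ϑ - 1))) t := by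
      apply hfder.congr_of_eventuallyEq
      filter_upwards [Iio_mem_nhds htT] with x hx
      exact hkey x (le_of_lt hx)
    convert hyd using 1
    rw [hkey t htT.le, hη, hA]
    set S := ∫ r in (0:ℝ)..t, b r with hS
    set P := ∫ s in t..T, (A s)⁻¹ with hP
    have e1 : (η₀ * P ^ (1 - ϑ)) ^ q = η₀ ^ q * P ^ ((1 - ϑ) * q) := by
      rw [Real.mul_rpow hη₀.le (Real.rpow_nonneg hIt.le _), ← Real.rpow_mul hIt.le]
    have e2 : (η₀ * Real.exp S) ^ (q - 1) = η₀ ^ (q - 1) * Real.exp ((q - 1) * S) := by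
      rw [Real.mul_rpow hη₀.le (Real.exp_pos S).le, ← Real.exp_mul, mul_comm S (q - 1)]
    rw [e1, e2]
    have hc : (1 - ϑ) * q = 1 - ϑ - 1 := by rw [hϑ]; field_simp; ring
    rw [hc]
    have hη₀q : η₀ ^ q = η₀ ^ (q - 1) * η₀ := by
      rw [← Real.rpow_add_one hη₀.ne' (q - 1)]; ring_nf
    rw [hη₀q]
    have h1ϑ : 1 - ϑ = -(q - 1)⁻¹ := by rw [hϑ]; field_simp; ring
    rw [h1ϑ]
    have hne1 : η₀ ^ (q - 1) ≠ 0 := (Real.rpow_pos_of_pos hη₀ _).ne'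
    have hne2 : Real.exp ((q - 1) * S) ≠ 0 := (Real.exp_pos _).ne'
    field_simp
  · have hint : MeasureTheory.IntegrableOn (fun s => (A s)⁻¹) (Set.uIcc 0 T)
        MeasureTheory.volume := by
      rw [Set.uIcc_of_le hT.le]
      exact (hgu.mono (Set.Icc_subset_Icc hu0.le le_rfl)).integrableOn_compact isCompact_Icc
    have hIcont : ContinuousOn (fun x => ∫ s in x..T, (A s)⁻¹) (Set.Icc 0 T) := by
      have := intervalIntegral.continuousOn_primitive_interval_left hint
      rwa [Set.uIcc_of_le hT.le] at this
    have hl : nhdsWithin T (Set.Iio T) = nhdsWithin T (Set.Ioo 0 T) :=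
      (nhdsWithin_Ioo_eq_nhdsLT hT).symm
    have hIT : Filter.Tendsto (fun x => ∫ s in x..T, (A s)⁻¹)
        (nhdsWithin T (Set.Iio T)) (nhdsWithin 0 (Set.Ioi 0)) := by
      rw [hl]
      apply tendsto_nhdsWithin_of_tendsto_nhds_of_eventually_within
      · have h0 := (hIcont T (Set.right_mem_Icc.2 hT.le)).tendsto
        rw [intervalIntegral.integral_same] at h0
        exact h0.mono_left (nhdsWithin_mono T Set.Ioo_subset_Icc_self)
      · filter_upwards [self_mem_nhdsWithin] with x hx
        exact hIpos x ⟨hx.1.le, hx.2⟩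
    have hϑ1 : (0:ℝ) < ϑ - 1 := by
      have h : (1:ℝ) < q / (q - 1) := (one_lt_div hq1).2 (by linarith)
      rw [hϑ]; linarith
    have hpow : Filter.Tendsto (fun x : ℝ => x ^ (ϑ - 1))
        (nhdsWithin 0 (Set.Ioi 0)) (nhdsWithin 0 (Set.Ioi 0)) := by
      apply tendsto_nhdsWithin_of_tendsto_nhds_of_eventually_within
      · have := (Real.continuousAt_rpow_const 0 (ϑ - 1) (Or.inr hϑ1.le)).tendsto
        rw [Real.zero_rpow hϑ1.ne'] at this
        exact this.mono_left nhdsWithin_le_nhds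
      · filter_upwards [self_mem_nhdsWithin] with x hx
        exact Real.rpow_pos_of_pos hx _
    have hcomp := hpow.comp hIT
    have hinv := hcomp.inv_tendsto_nhdsGT_zero
    have hmul := hinv.const_mul_atTop hη₀
    refine hmul.congr' ?_
    filter_upwards [self_mem_nhdsWithin] with x hx
    have hx' : x < T := hx
    simp only [Function.comp, Pi.inv_apply]
    rw [hkey x hx'.le, ← Real.rpow_neg (hInn x hx'.le), neg_sub]
end

section
/- Let T > 0, 𝔮 > 1, ϑ := 𝔮/(𝔮−1). Let η, γ : [0,T] → ℝ be continuous with η > 0 and γ ≥ 0, and let Y : [0,T) → ℝ be differentiable with Y > 0 and Y'(t) = Y(t)^𝔮/((𝔮−1)·η(t)^{𝔮−1}) − γ(t). Let X : [0,T) → ℝ be differentiable, X > 0, with X'(t) = −(Y(t)/η(t))^{𝔮−1}·X(t), and set α(t) := X'(t). Then for all t ∈ [0,T): d/dt [Y(t)·X(t)^ϑ] = −(η(t)·|α(t)|^ϑ + γ(t)·X(t)^ϑ). -/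
/-- Along the candidate optimal feedback control, the derivative of `Y·X^ϑ` equals
minus the running cost. -/
theorem ito_computation_deterministic (T q ϑ : ℝ)
    (hT : 0 < T) (hq : 1 < q) (hϑ : ϑ = q / (q - 1))
    (η γ Y X α : ℝ → ℝ)
    (hηc : ContinuousOn η (Set.Icc 0 T)) (hηpos : ∀ t ∈ Set.Icc (0 : ℝ) T, 0 < η t)
    (hγc : ContinuousOn γ (Set.Icc 0 T)) (hγ0 : ∀ t ∈ Set.Icc (0 : ℝ) T, 0 ≤ γ t)
    (hYpos : ∀ t ∈ Set.Ico (0 : ℝ) T, 0 < Y t)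
    (hY : ∀ t ∈ Set.Ico (0 : ℝ) T,
      HasDerivAt Y (Y t ^ q / ((q - 1) * η t ^ (q - 1)) - γ t) t)
    (hXpos : ∀ t ∈ Set.Ico (0 : ℝ) T, 0 < X t)
    (hα : ∀ t, α t = -((Y t / η t) ^ (q - 1)) * X t)
    (hX : ∀ t ∈ Set.Ico (0 : ℝ) T, HasDerivAt X (α t) t) :
    ∀ t ∈ Set.Ico (0 : ℝ) T,
      HasDerivAt (fun s => Y s * X s ^ ϑ)
        (-(η t * |α t| ^ ϑ + γ t * X t ^ ϑ)) t := by
  intro t ht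
  have htc : t ∈ Set.Icc (0:ℝ) T := ⟨ht.1, ht.2.le⟩
  have hYt := hYpos t ht
  have hXt := hXpos t ht
  have hηt := hηpos t htc
  have hq1 : (0:ℝ) < q - 1 := by linarith
  have hd1 := hY t ht
  have hd2 := hX t ht
  have hXd : HasDerivAt (fun s => X s ^ ϑ) (α t * ϑ * X t ^ (ϑ - 1)) t :=
    hd2.rpow_const (Or.inl hXt.ne')
  have hmain := hd1.mul hXd
  have habs : |α t| = Y t ^ (q-1) / η t ^ (q-1) * X t := by
    rw [hα t, Real.div_rpow hYt.le hηt.le]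
    rw [abs_mul, abs_neg, abs_of_pos (by positivity), abs_of_pos hXt]
  have hXϑ : X t ^ ϑ = X t ^ (ϑ - 1) * X t := by
    rw [← Real.rpow_add_one hXt.ne']; ring_nf
  have hYq : Y t ^ q = (Y t ^ (q-1)) ^ ϑ := by
    rw [← Real.rpow_mul hYt.le]
    congr 1
    rw [hϑ]; field_simp
  have hηq : η t ^ q = (η t ^ (q-1)) ^ ϑ := by
    rw [← Real.rpow_mul hηt.le]
    congr 1
    rw [hϑ]; field_simp
  have hαϑ : |α t| ^ ϑ = Y t ^ q / η t ^ q * X t ^ ϑ := by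
    rw [habs, Real.mul_rpow (by positivity) hXt.le,
      Real.div_rpow (by positivity) (by positivity), hYq, hηq]
  have hηq' : η t ^ q = η t ^ (q-1) * η t := by
    rw [← Real.rpow_add_one hηt.ne']; ring_nf
  have hYq' : Y t ^ q = Y t * Y t ^ (q-1) := by
    rw [show q = (q-1)+1 by ring, Real.rpow_add_one hYt.ne']; ring
  have hϑq : ϑ * (q - 1) = q := by
    rw [hϑ]; field_simp
  have key : (Y t ^ q / ((q - 1) * η t ^ (q - 1)) - γ t) * X t ^ ϑ
      + Y t * (α t * ϑ * X t ^ (ϑ - 1))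
      = -(η t * |α t| ^ ϑ + γ t * X t ^ ϑ) := by
    rw [hαϑ, hα t, Real.div_rpow hYt.le hηt.le, hηq', hXϑ, hYq']
    have hηne : η t ^ (q-1) ≠ 0 := by positivity
    field_simp
    linear_combination (-(Y t * Y t ^ (q-1))) * hϑq


  rw [← key]
  exact hmain
end

section
/- Let T > 0, 𝔮 > 1, ϑ := 𝔮/(𝔮−1), let η, γ : [0,T] → ℝ be continuous with η > 0, γ ≥ 0, and let Y : [0,T] → ℝ be continuously differentiable with Y ≥ 0 and Y'(t) = Y(t)^𝔮/((𝔮−1)·η(t)^{𝔮−1}) − γ(t) for all t. Then for every continuously differentiable X : [0,T] → ℝ with X(0) = x: Y(0)·|x|^ϑ ≤ ∫₀ᵀ (η(t)·|X'(t)|^ϑ + γ(t)·|X(t)|^ϑ) dt + Y(T)·|X(T)|^ϑ. -/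
open intervalIntegral

lemma abs_rpow_hasDerivAt {ϑ : ℝ} (hϑ : 1 < ϑ) (u : ℝ) :
    HasDerivAt (fun v : ℝ => |v| ^ ϑ) (ϑ * |u| ^ (ϑ - 1) * Real.sign u) u := by
  rcases lt_trichotomy u 0 with hu | hu | hu
  · have h1 : HasDerivAt (fun v : ℝ => -v) (-1) u := (hasDerivAt_id u).neg
    have h2 := (Real.hasDerivAt_rpow_const (x := -u) (p := ϑ)
      (Or.inl (neg_ne_zero.mpr hu.ne))).comp u h1
    rw [Real.sign_of_neg hu, abs_of_neg hu]
    have h3 : HasDerivAt (fun v : ℝ => (-v) ^ ϑ) (ϑ * (-u) ^ (ϑ - 1) * (-1)) u := h2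
    refine h3.congr_of_eventuallyEq ?_
    filter_upwards [eventually_lt_nhds hu] with v hv
    rw [abs_of_neg hv]
  · subst hu
    rw [Real.sign_zero, mul_zero]
    rw [hasDerivAt_iff_tendsto_slope]
    have hg : Filter.Tendsto (fun v : ℝ => |v| ^ (ϑ - 1)) (nhdsWithin 0 {(0:ℝ)}ᶜ) (nhds 0) := by
      have : Filter.Tendsto (fun v : ℝ => |v| ^ (ϑ - 1)) (nhds 0) (nhds (|(0:ℝ)| ^ (ϑ - 1))) := by
        exact ((Real.continuousAt_rpow_const _ _ (Or.inr (by linarith))).comp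
          continuous_abs.continuousAt)
      rw [abs_zero, Real.zero_rpow (by linarith)] at this
      exact this.mono_left nhdsWithin_le_nhds
    refine squeeze_zero_norm' ?_ hg
    filter_upwards [self_mem_nhdsWithin] with v hv
    have hv0 : v ≠ 0 := hv
    have hav : (0:ℝ) < |v| := abs_pos.mpr hv0
    rw [slope_def_field]
    rw [abs_zero, Real.zero_rpow (by linarith), sub_zero, sub_zero]
    rw [Real.norm_eq_abs, abs_div, abs_of_nonneg (Real.rpow_nonneg (abs_nonneg v) ϑ)]
    rw [Real.rpow_sub hav, Real.rpow_one]
    -- done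
  · have h2 := Real.hasDerivAt_rpow_const (x := u) (p := ϑ) (Or.inl hu.ne')
    rw [Real.sign_of_pos hu, abs_of_pos hu, mul_one]
    refine h2.congr_of_eventuallyEq ?_
    filter_upwards [eventually_gt_nhds hu] with v hv
    rw [abs_of_pos hv]

lemma young_weighted {q ϑ e a b : ℝ} (hq : 1 < q) (hϑ : ϑ = q / (q - 1)) (he : 0 < e)
    (ha : 0 ≤ a) (hb : 0 ≤ b) :
    ϑ * a * b ≤ e * a ^ ϑ + b ^ q / ((q - 1) * e ^ (q - 1)) := by
  have hq1 : (0:ℝ) < q - 1 := by linarith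
  have hϑ1 : 1 < ϑ := by rw [hϑ, lt_div_iff₀ hq1]; linarith
  have hϑ0 : ϑ ≠ 0 := by linarith
  have hconj : Real.HolderConjugate ϑ q := by
    rw [Real.holderConjugate_iff]
    constructor
    · exact hϑ1
    · rw [hϑ]; field_simp; ring
  set c : ℝ := e ^ (1 / ϑ) with hc
  have hcpos : 0 < c := Real.rpow_pos_of_pos he _
  have key := Real.young_inequality_of_nonneg (mul_nonneg hcpos.le ha)
    (div_nonneg hb hcpos.le) hconj
  have hca : (c * a) * (b / c) = a * b := by field_simp
  have hcϑ : (c * a) ^ ϑ = e * a ^ ϑ := by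
    rw [Real.mul_rpow hcpos.le ha, hc, ← Real.rpow_mul he.le, one_div,
      inv_mul_cancel₀ hϑ0, Real.rpow_one]
  have hexp : (1 / ϑ) * q = q - 1 := by
    rw [hϑ]; field_simp
  have hcq : (b / c) ^ q = b ^ q / e ^ (q - 1) := by
    rw [Real.div_rpow hb hcpos.le, hc, ← Real.rpow_mul he.le, hexp]
  have hepos : (0:ℝ) < e ^ (q - 1) := Real.rpow_pos_of_pos he _
  calc ϑ * a * b = ϑ * (c * a * (b / c)) := by rw [hca]; ring
    _ ≤ ϑ * ((c * a) ^ ϑ / ϑ + (b / c) ^ q / q) :=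
        mul_le_mul_of_nonneg_left key (by linarith)
    _ = e * a ^ ϑ + b ^ q / ((q - 1) * e ^ (q - 1)) := by
        rw [hcϑ, hcq, hϑ]; field_simp


/-- Deterministic verification inequality for the unconstrained liquidation problem. -/
theorem verification_inequality (T q ϑ x : ℝ)
    (hT : 0 < T) (hq : 1 < q) (hϑ : ϑ = q / (q - 1))
    (η γ Y X X' : ℝ → ℝ)
    (hηc : ContinuousOn η (Set.Icc 0 T)) (hηpos : ∀ t ∈ Set.Icc (0 : ℝ) T, 0 < η t)
    (hγc : ContinuousOn γ (Set.Icc 0 T)) (hγ0 : ∀ t ∈ Set.Icc (0 : ℝ) T, 0 ≤ γ t)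
    (hY0 : ∀ t ∈ Set.Icc (0 : ℝ) T, 0 ≤ Y t)
    (hY : ∀ t ∈ Set.Icc (0 : ℝ) T,
      HasDerivAt Y (Y t ^ q / ((q - 1) * η t ^ (q - 1)) - γ t) t)
    (hYc : ContinuousOn Y (Set.Icc 0 T))
    (hX : ∀ t ∈ Set.Icc (0 : ℝ) T, HasDerivAt X (X' t) t)
    (hX'c : ContinuousOn X' (Set.Icc 0 T))
    (hX0 : X 0 = x) :
    Y 0 * |x| ^ ϑ ≤
      (∫ t in (0 : ℝ)..T, (η t * |X' t| ^ ϑ + γ t * |X t| ^ ϑ))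
        + Y T * |X T| ^ ϑ := by
  have hq1 : (0:ℝ) < q - 1 := by linarith
  have hϑ1 : 1 < ϑ := by rw [hϑ, lt_div_iff₀ hq1]; linarith
  have hϑ0 : (0:ℝ) ≤ ϑ := by linarith
  set ψ : ℝ → ℝ := fun t => η t * |X' t| ^ ϑ + γ t * |X t| ^ ϑ with hψ
  have hXc : ContinuousOn X (Set.Icc 0 T) := fun t ht =>
    (hX t ht).continuousAt.continuousWithinAt
  have hXr : ContinuousOn (fun t => |X t| ^ ϑ) (Set.Icc 0 T) :=
    (hXc.abs).rpow_const (fun t _ => Or.inr hϑ0)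
  have hX'r : ContinuousOn (fun t => |X' t| ^ ϑ) (Set.Icc 0 T) :=
    (hX'c.abs).rpow_const (fun t _ => Or.inr hϑ0)
  have hψc : ContinuousOn ψ (Set.Icc 0 T) := (hηc.mul hX'r).add (hγc.mul hXr)
  have huIcc : Set.uIcc (0:ℝ) T = Set.Icc 0 T := Set.uIcc_of_le hT.le
  set G : ℝ → ℝ := fun t => ∫ s in (0:ℝ)..t, ψ s with hG
  set F : ℝ → ℝ := fun t => Y t * |X t| ^ ϑ + G t with hF
  have hGc : ContinuousOn G (Set.Icc 0 T) := by
    have := intervalIntegral.continuousOn_primitive_interval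
      (f := ψ) (a := (0:ℝ)) (b := T) (μ := MeasureTheory.volume)
      (by rw [huIcc]; exact hψc.integrableOn_Icc)
    rwa [huIcc] at this
  have hFc : ContinuousOn F (Set.Icc 0 T) := (hYc.mul hXr).add hGc
  have hint : interior (Set.Icc (0:ℝ) T) = Set.Ioo 0 T := interior_Icc
  -- derivative of F on the interior
  have hFd : ∀ t ∈ Set.Ioo (0:ℝ) T, HasDerivAt F
      ((Y t ^ q / ((q - 1) * η t ^ (q - 1)) - γ t) * |X t| ^ ϑ
        + Y t * (ϑ * |X t| ^ (ϑ - 1) * Real.sign (X t) * X' t) + ψ t) t := by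
    intro t ht
    have htI : t ∈ Set.Icc (0:ℝ) T := Set.Ioo_subset_Icc_self ht
    have h1 : HasDerivAt (fun s => Y s * |X s| ^ ϑ)
        ((Y t ^ q / ((q - 1) * η t ^ (q - 1)) - γ t) * |X t| ^ ϑ
          + Y t * (ϑ * |X t| ^ (ϑ - 1) * Real.sign (X t) * X' t)) t :=
      (hY t htI).mul ((abs_rpow_hasDerivAt hϑ1 (X t)).comp t (hX t htI))
    have h2 : HasDerivAt G (ψ t) t := by
      refine intervalIntegral.integral_hasDerivAt_right ?_ ?_ ?_
      · refine (hψc.mono ?_).intervalIntegrable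
        rw [Set.uIcc_of_le ht.1.le]
        exact Set.Icc_subset_Icc le_rfl ht.2.le
      · exact ContinuousOn.stronglyMeasurableAtFilter isOpen_Ioo
          (hψc.mono Set.Ioo_subset_Icc_self) t ht
      · exact hψc.continuousAt (Icc_mem_nhds ht.1 ht.2)
    exact h1.add h2
  have hFmono : MonotoneOn F (Set.Icc 0 T) := by
    apply monotoneOn_of_deriv_nonneg (convex_Icc 0 T) hFc
    · intro t ht
      rw [hint] at ht
      exact (hFd t ht).differentiableAt.differentiableWithinAt
    · intro t ht
      rw [hint] at ht
      rw [(hFd t ht).deriv]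
      have htI : t ∈ Set.Icc (0:ℝ) T := Set.Ioo_subset_Icc_self ht
      have hA : (0:ℝ) ≤ |X t| := abs_nonneg _
      have hy : (0:ℝ) ≤ Y t := hY0 t htI
      have he : (0:ℝ) < η t := hηpos t htI
      -- Young's inequality
      have young := young_weighted hq hϑ he (abs_nonneg (X' t))
        (mul_nonneg hy (Real.rpow_nonneg hA (ϑ - 1)))
      have hbq : (Y t * |X t| ^ (ϑ - 1)) ^ q = Y t ^ q * |X t| ^ ϑ := by
        rw [Real.mul_rpow hy (Real.rpow_nonneg hA _), ← Real.rpow_mul hA]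
        congr 2
        rw [hϑ]; field_simp; ring
      rw [hbq] at young
      -- bound the cross term
      have hcross : -(ϑ * |X' t| * (Y t * |X t| ^ (ϑ - 1)))
          ≤ Y t * (ϑ * |X t| ^ (ϑ - 1) * Real.sign (X t) * X' t) := by
        have hs : |Real.sign (X t) * X' t| ≤ |X' t| := by
          rw [abs_mul]
          rcases lt_trichotomy (X t) 0 with h | h | h
          · rw [Real.sign_of_neg h]; simp
          · rw [h, Real.sign_zero]; simp [abs_nonneg]
          · rw [Real.sign_of_pos h]; simp
        have := neg_abs_le (Real.sign (X t) * X' t)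
        nlinarith [mul_nonneg (mul_nonneg (by linarith : (0:ℝ) ≤ ϑ) hy)
          (Real.rpow_nonneg hA (ϑ - 1)), abs_nonneg (X' t),
          Real.rpow_nonneg hA (ϑ - 1)]
      have hg : (0:ℝ) ≤ γ t := hγ0 t htI
      have hApow : (0:ℝ) ≤ |X t| ^ ϑ := Real.rpow_nonneg hA ϑ
      simp only [hψ]
      have heq : (Y t ^ q / ((q - 1) * η t ^ (q - 1)) - γ t) * |X t| ^ ϑ
          = Y t ^ q * |X t| ^ ϑ / ((q - 1) * η t ^ (q - 1)) - γ t * |X t| ^ ϑ := by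
        ring
      linarith [young, hcross, heq]
  have hkey := hFmono (Set.left_mem_Icc.mpr hT.le) (Set.right_mem_Icc.mpr hT.le) hT.le
  simp only [hF, hG, intervalIntegral.integral_same, add_zero, hX0] at hkey
  linarith [hkey]
end

section
/- Let T > 0, 𝔮 > 1, ϑ := 𝔮/(𝔮−1). Let η, γ : [0,T) → ℝ be continuous with η > 0, γ ≥ 0, let Y : [0,T) → ℝ be differentiable with Y > 0 and Y'(t) = Y(t)^𝔮/((𝔮−1)·η(t)^{𝔮−1}) − γ(t), and let X : [0,T) → ℝ be differentiable with X ≥ 0 and X'(t) = −(Y(t)/η(t))^{𝔮−1}·X(t). Then the function θ(t) := Y(t)·X(t)^{ϑ−1} + ∫₀ᵗ γ(s)·X(s)^{ϑ−1} ds is constant on [0,T). -/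
open intervalIntegral

lemma ftc_ici {T : ℝ} {f : ℝ → ℝ} (hf : ContinuousOn f (Set.Ico 0 T)) {x : ℝ}
    (hx : x ∈ Set.Ico 0 T) :
    HasDerivWithinAt (fun u => ∫ s in (0:ℝ)..u, f s) (f x) (Set.Ici x) x := by
  have hmem : Set.Ico 0 T ∈ nhdsWithin x (Set.Ioi x) := by
    rw [mem_nhdsWithin]
    exact ⟨Set.Iio T, isOpen_Iio, hx.2, fun y hy => ⟨hx.1.trans hy.2.le, hy.1⟩⟩
  have hint : IntervalIntegrable f MeasureTheory.volume 0 x := by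
    apply ContinuousOn.intervalIntegrable
    refine hf.mono ?_
    rw [Set.uIcc_of_le hx.1]
    exact fun y hy => ⟨hy.1, lt_of_le_of_lt hy.2 hx.2⟩
  have hmeas : StronglyMeasurableAtFilter f (nhdsWithin x (Set.Ioi x)) :=
    ⟨Set.Ico 0 T, hmem, hf.aestronglyMeasurable measurableSet_Ico⟩
  exact intervalIntegral.integral_hasDerivWithinAt_right (t := Set.Ioi x) hint hmeas
    ((hf.continuousWithinAt hx).mono_of_mem_nhdsWithin hmem)

lemma prim_cont {T : ℝ} {f : ℝ → ℝ} (hf : ContinuousOn f (Set.Ico 0 T)) {t : ℝ}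
    (ht : t ∈ Set.Ico 0 T) :
    ContinuousOn (fun u => ∫ s in (0:ℝ)..u, f s) (Set.Icc 0 t) := by
  have hsub : Set.Icc (0:ℝ) t ⊆ Set.Ico 0 T :=
    fun y hy => ⟨hy.1, lt_of_le_of_lt hy.2 ht.2⟩
  have := intervalIntegral.continuousOn_primitive_interval
    (f := f) (a := (0:ℝ)) (b := t) (μ := MeasureTheory.volume) ?_
  · rwa [Set.uIcc_of_le ht.1] at this
  · rw [Set.uIcc_of_le ht.1]
    exact (hf.mono hsub).integrableOn_compact isCompact_Icc

/-- The process `θ_t = Y_t X_t^{ϑ-1} + ∫₀ᵗ γ X^{ϑ-1}` is constant on `[0,T)`. -/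
theorem theta_constant (T q ϑ : ℝ)
    (hT : 0 < T) (hq : 1 < q) (hϑ : ϑ = q / (q - 1))
    (η γ Y X : ℝ → ℝ)
    (hηc : ContinuousOn η (Set.Ico 0 T)) (hηpos : ∀ t ∈ Set.Ico (0 : ℝ) T, 0 < η t)
    (hγc : ContinuousOn γ (Set.Ico 0 T)) (hγ0 : ∀ t ∈ Set.Ico (0 : ℝ) T, 0 ≤ γ t)
    (hYpos : ∀ t ∈ Set.Ico (0 : ℝ) T, 0 < Y t)
    (hY : ∀ t ∈ Set.Ico (0 : ℝ) T,
      HasDerivAt Y (Y t ^ q / ((q - 1) * η t ^ (q - 1)) - γ t) t)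
    (hX0 : ∀ t ∈ Set.Ico (0 : ℝ) T, 0 ≤ X t)
    (hX : ∀ t ∈ Set.Ico (0 : ℝ) T,
      HasDerivAt X (-((Y t / η t) ^ (q - 1)) * X t) t)
    (θ : ℝ → ℝ)
    (hθ : ∀ t, θ t = Y t * X t ^ (ϑ - 1)
        + ∫ s in (0 : ℝ)..t, γ s * X s ^ (ϑ - 1)) :
    ∀ t ∈ Set.Ico (0 : ℝ) T, θ t = θ 0 := by
  have hq1 : (0:ℝ) < q - 1 := by linarith
  have hth : ϑ - 1 = 1 / (q - 1) := by rw [hϑ]; field_simp; ring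
  have hth0 : (0:ℝ) < ϑ - 1 := by rw [hth]; positivity
  have h0T : (0:ℝ) ∈ Set.Ico (0:ℝ) T := ⟨le_refl 0, hT⟩
  have hYc : ContinuousOn Y (Set.Ico 0 T) :=
    fun y hy => (hY y hy).continuousAt.continuousWithinAt
  have hXc : ContinuousOn X (Set.Ico 0 T) :=
    fun y hy => (hX y hy).continuousAt.continuousWithinAt
  set c : ℝ → ℝ := fun u => (Y u / η u) ^ (q - 1) with hcdef
  have hcc : ContinuousOn c (Set.Ico 0 T) :=
    (hYc.div hηc (fun y hy => (hηpos y hy).ne')).rpow_const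
      (fun y _ => Or.inr hq1.le)
  set E : ℝ → ℝ := fun u => ∫ s in (0:ℝ)..u, c s with hEdef
  -- representation of X
  have hXrep : ∀ u ∈ Set.Ico (0:ℝ) T, X u = X 0 * Real.exp (-(E u)) := by
    intro u hu
    have hsubu : Set.Icc (0:ℝ) u ⊆ Set.Ico 0 T :=
      fun y hy => ⟨hy.1, lt_of_le_of_lt hy.2 hu.2⟩
    have hcont : ContinuousOn (fun v => X v * Real.exp (E v)) (Set.Icc 0 u) :=
      (hXc.mono hsubu).mul (Real.continuous_exp.comp_continuousOn (prim_cont hcc hu))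
    have hderiv : ∀ x ∈ Set.Ico 0 u,
        HasDerivWithinAt (fun v => X v * Real.exp (E v)) 0 (Set.Ici x) x := by
      intro x hx
      have hxs : x ∈ Set.Ico (0:ℝ) T := ⟨hx.1, lt_trans hx.2 hu.2⟩
      have hdE : HasDerivWithinAt E (c x) (Set.Ici x) x := ftc_ici hcc hxs
      have hd := ((hX x hxs).hasDerivWithinAt).mul hdE.exp
      refine hd.congr_deriv ?_
      ring
    have hconst := constant_of_has_deriv_right_zero hcont hderiv u
      (Set.right_mem_Icc.2 hu.1)
    have hE0 : E 0 = 0 := intervalIntegral.integral_same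
    rw [hE0, Real.exp_zero, mul_one] at hconst
    rw [← hconst, Real.exp_neg]
    field_simp
  rcases (hX0 0 h0T).eq_or_lt with h0 | h0
  · -- X ≡ 0
    have hXz : ∀ u ∈ Set.Ico (0:ℝ) T, X u = 0 := fun u hu => by
      rw [hXrep u hu, ← h0, zero_mul]
    have hzero : ∀ u ∈ Set.Ico (0:ℝ) T, θ u = 0 := by
      intro u hu
      have hsubu : Set.Icc (0:ℝ) u ⊆ Set.Ico 0 T :=
        fun y hy => ⟨hy.1, lt_of_le_of_lt hy.2 hu.2⟩
      rw [hθ, hXz u hu, Real.zero_rpow hth0.ne', mul_zero, zero_add]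
      have : ∀ v ∈ Set.uIcc (0:ℝ) u, γ v * X v ^ (ϑ - 1) = 0 := by
        intro v hv
        rw [Set.uIcc_of_le hu.1] at hv
        rw [hXz v (hsubu hv), Real.zero_rpow hth0.ne', mul_zero]
      rw [intervalIntegral.integral_congr this, intervalIntegral.integral_zero]
    intro t ht
    rw [hzero t ht, hzero 0 h0T]
  · -- X > 0
    have hXpos : ∀ u ∈ Set.Ico (0:ℝ) T, 0 < X u := fun u hu => by
      rw [hXrep u hu]; positivity
    have hIc : ContinuousOn (fun v => γ v * X v ^ (ϑ - 1)) (Set.Ico 0 T) :=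
      hγc.mul (hXc.rpow_const (fun y hy => Or.inl (hXpos y hy).ne'))
    intro t ht
    have hsub : Set.Icc (0:ℝ) t ⊆ Set.Ico 0 T :=
      fun y hy => ⟨hy.1, lt_of_le_of_lt hy.2 ht.2⟩
    have hfun : θ = fun u => Y u * X u ^ (ϑ - 1)
        + ∫ s in (0:ℝ)..u, γ s * X s ^ (ϑ - 1) := funext hθ
    have hθc : ContinuousOn θ (Set.Icc 0 t) := by
      rw [hfun]
      exact ((hYc.mono hsub).mul ((hXc.mono hsub).rpow_const
        (fun y hy => Or.inl (hXpos y (hsub hy)).ne'))).add (prim_cont hIc ht)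
    have hderiv : ∀ x ∈ Set.Ico 0 t, HasDerivWithinAt θ 0 (Set.Ici x) x := by
      intro x hx
      have hxs : x ∈ Set.Ico (0:ℝ) T := ⟨hx.1, lt_trans hx.2 ht.2⟩
      have hXx := hXpos x hxs
      have hYx := hYpos x hxs
      have hηx := hηpos x hxs
      have hdpow := (hX x hxs).rpow_const (p := ϑ - 1) (Or.inl hXx.ne')
      have hdmul := (hY x hxs).mul hdpow
      have hdint := ftc_ici hIc hxs
      rw [hfun]
      have hD := hdmul.hasDerivWithinAt.add hdint
      refine hD.congr_deriv ?_
      symm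
      have hdiv : (Y x / η x) ^ (q - 1) = Y x ^ (q - 1) / η x ^ (q - 1) :=
        Real.div_rpow hYx.le hηx.le (q - 1)
      have hBA : X x ^ (ϑ - 1 - 1) * X x = X x ^ (ϑ - 1) := by
        rw [← Real.rpow_add_one hXx.ne']
        norm_num
      have hYq : Y x ^ q = Y x * Y x ^ (q - 1) := by
        have h1 : (1:ℝ) + (q - 1) = q := by ring
        have h2 := Real.rpow_add hYx 1 (q - 1)
        rw [h1, Real.rpow_one] at h2
        exact h2
      have hηp : (0:ℝ) < η x ^ (q - 1) := Real.rpow_pos_of_pos hηx _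
      rw [hdiv, hYq, ← div_div]
      linear_combination (Y x * Y x ^ (q - 1) * (ϑ - 1) / η x ^ (q - 1)) * hBA
        + (Y x * Y x ^ (q - 1) * X x ^ (ϑ - 1) / η x ^ (q - 1)) * hth
    have := constant_of_has_deriv_right_zero hθc hderiv t (Set.right_mem_Icc.2 ht.1)
    exact this
end

section
/- In the setting of the previous statement, assume additionally that X(0) = x ≥ 0 and that Y(t) → +∞ as t → T⁻. Then X(t) → 0 as t → T⁻. More precisely, X(t) ≤ (θ₀/Y(t))^{𝔮−1} for all t ∈ [0,T), where θ₀ := Y(0)·x^{ϑ−1}. -/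
/-- If `Y` blows up at `T`, the feedback-controlled state `X` converges to `0` at `T`,
with the explicit bound `X t ≤ (θ₀ / Y t)^(q-1)`. -/
theorem terminal_constraint_attained (T q ϑ x : ℝ)
    (hT : 0 < T) (hq : 1 < q) (hϑ : ϑ = q / (q - 1)) (hx : 0 ≤ x)
    (η γ Y X : ℝ → ℝ)
    (hηc : ContinuousOn η (Set.Ico 0 T)) (hηpos : ∀ t ∈ Set.Ico (0 : ℝ) T, 0 < η t)
    (hγc : ContinuousOn γ (Set.Ico 0 T)) (hγ0 : ∀ t ∈ Set.Ico (0 : ℝ) T, 0 ≤ γ t)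
    (hYpos : ∀ t ∈ Set.Ico (0 : ℝ) T, 0 < Y t)
    (hY : ∀ t ∈ Set.Ico (0 : ℝ) T,
      HasDerivAt Y (Y t ^ q / ((q - 1) * η t ^ (q - 1)) - γ t) t)
    (hX0 : ∀ t ∈ Set.Ico (0 : ℝ) T, 0 ≤ X t)
    (hX : ∀ t ∈ Set.Ico (0 : ℝ) T,
      HasDerivAt X (-((Y t / η t) ^ (q - 1)) * X t) t)
    (hXinit : X 0 = x)
    (hYblow : Filter.Tendsto Y (nhdsWithin T (Set.Iio T)) Filter.atTop) :
    Filter.Tendsto X (nhdsWithin T (Set.Iio T)) (nhds 0) ∧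
    ∀ t ∈ Set.Ico (0 : ℝ) T,
      X t ≤ (Y 0 * x ^ (ϑ - 1) / Y t) ^ (q - 1) := by
  have hq1 : (0:ℝ) < q - 1 := by linarith
  have h0T : (0:ℝ) ∈ Set.Ico (0:ℝ) T := ⟨le_refl 0, hT⟩
  have hY0 : 0 < Y 0 := hYpos 0 h0T
  -- the Lyapunov function
  set φ : ℝ → ℝ := fun s => X s * Y s ^ (q - 1) with hφdef
  have hφderiv : ∀ s ∈ Set.Ico (0:ℝ) T,
      HasDerivAt φ (-((q-1) * γ s * Y s ^ (q-2) * X s)) s := by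
    intro s hs
    have hYs := hYpos s hs
    have hηs := hηpos s hs
    have h1 : HasDerivAt (fun u => Y u ^ (q-1))
        ((Y s ^ q / ((q - 1) * η s ^ (q - 1)) - γ s) * (q-1) * Y s ^ (q-1-1)) s :=
      (hY s hs).rpow_const (Or.inl (ne_of_gt hYs))
    have h2 := (hX s hs).mul h1
    convert h2 using 1
    case e'_4 => rfl
    case e'_5 => rfl
    case e'_8 => rfl
    have hηne : η s ^ (q-1) ≠ 0 := ne_of_gt (Real.rpow_pos_of_pos hηs _)
    rw [Real.div_rpow hYs.le hηs.le, show q - 1 - 1 = q - 2 from by ring]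
    have e1 : Y s ^ (q-1) * Y s ^ (q-1) = Y s ^ (q-2) * Y s ^ q := by
      rw [← Real.rpow_add hYs, ← Real.rpow_add hYs]; ring_nf
    field_simp
    linear_combination X s * e1
  -- φ is antitone
  have hmono : ∀ t ∈ Set.Ico (0:ℝ) T, φ t ≤ φ 0 := by
    intro t ht
    have hsub : Set.Icc (0:ℝ) t ⊆ Set.Ico 0 T := fun u hu => ⟨hu.1, lt_of_le_of_lt hu.2 ht.2⟩
    have hanti : AntitoneOn φ (Set.Icc 0 t) := by
      apply antitoneOn_of_deriv_nonpos (convex_Icc 0 t)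
      · intro u hu; exact (hφderiv u (hsub hu)).continuousAt.continuousWithinAt
      · intro u hu
        rw [interior_Icc] at hu
        exact (hφderiv u (hsub (Set.Ioo_subset_Icc_self hu))).differentiableAt.differentiableWithinAt
      · intro u hu
        rw [interior_Icc] at hu
        have hu' := hsub (Set.Ioo_subset_Icc_self hu)
        rw [(hφderiv u hu').deriv]
        have hg := hγ0 u hu'
        have hxx := hX0 u hu'
        have hyy : (0:ℝ) ≤ Y u ^ (q-2) := (Real.rpow_pos_of_pos (hYpos u hu') _).le
        have := mul_nonneg (mul_nonneg (mul_nonneg hq1.le hg) hyy) hxx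
        linarith
    exact hanti (Set.left_mem_Icc.2 ht.1) ⟨ht.1, le_refl t⟩ ht.1
  -- the explicit bound
  have hbound : ∀ t ∈ Set.Ico (0:ℝ) T, X t ≤ (Y 0 * x ^ (ϑ - 1) / Y t) ^ (q - 1) := by
    intro t ht
    have hYt := hYpos t ht
    have key : X t * Y t ^ (q-1) ≤ x * Y 0 ^ (q-1) := by
      have := hmono t ht
      simpa [hφdef, hXinit] using this
    have hx1 : (x ^ (ϑ-1)) ^ (q-1) = x := by
      rw [← Real.rpow_mul hx]
      have : (ϑ - 1) * (q - 1) = 1 := by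
        rw [hϑ]; field_simp; ring
      rw [this, Real.rpow_one]
    rw [Real.div_rpow (by positivity) hYt.le, Real.mul_rpow hY0.le (Real.rpow_nonneg hx _), hx1,
      le_div_iff₀ (Real.rpow_pos_of_pos hYt _)]
    nlinarith [key]
  refine ⟨?_, hbound⟩
  -- tendsto
  have hmem : Set.Ioo 0 T ∈ nhdsWithin T (Set.Iio T) :=
    Ioo_mem_nhdsLT_of_mem ⟨hT, le_refl T⟩
  have hYq : Filter.Tendsto (fun t => Y t ^ (q-1)) (nhdsWithin T (Set.Iio T)) Filter.atTop :=
    (tendsto_rpow_atTop hq1).comp hYblow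
  have hub : Filter.Tendsto (fun t => x * Y 0 ^ (q-1) / Y t ^ (q-1))
      (nhdsWithin T (Set.Iio T)) (nhds 0) :=
    Filter.Tendsto.div_atTop tendsto_const_nhds hYq
  apply tendsto_of_tendsto_of_tendsto_of_le_of_le' tendsto_const_nhds hub
  · filter_upwards [hmem] with t ht
    exact hX0 t ⟨ht.1.le, ht.2⟩
  · filter_upwards [hmem] with t ht
    have ht' : t ∈ Set.Ico (0:ℝ) T := ⟨ht.1.le, ht.2⟩
    have := hmono t ht'
    have hYt := hYpos t ht'
    rw [le_div_iff₀ (Real.rpow_pos_of_pos hYt _)]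
    have : X t * Y t ^ (q-1) ≤ x * Y 0 ^ (q-1) := by
      simpa [hφdef, hXinit] using this
    linarith
end

section
/- Let (Vᵢ)_{0 ≤ i ≤ N} be a discrete-time supermartingale with respect to a filtration (𝒢ᵢ), with each Vᵢ integrable. Let b > 0, let (ℓᵢ) be an adapted nonincreasing sequence of integrable random variables with ℓ₀ ≤ 0, and set uᵢ := ℓᵢ + b. Let D be the number of downcrossings of (Vᵢ) from (uᵢ) to (ℓᵢ), i.e. the largest k such that there exist indices s₁ < t₁ < s₂ < t₂ < ⋯ < s_k < t_k with V_{sⱼ} ≥ u_{sⱼ} and V_{tⱼ} ≤ ℓ_{tⱼ}. Then b·E[D] ≤ E[V₀ − V_N] + E[(V_N − u_N)⁺]. -/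
open MeasureTheory

theorem aux_D_eq_ucb {Ω : Type*} (N : ℕ) (g : ℕ → Ω → ℝ) (b : ℝ) (hb : 0 < b)
    (V l u : ℕ → Ω → ℝ)
    (hgle : ∀ i ω, i ≤ N → (g i ω ≤ 0 ↔ u i ω ≤ V i ω))
    (hgge : ∀ i ω, i ≤ N → (b ≤ g i ω ↔ V i ω ≤ l i ω))
    (ω : Ω) :
    sSup {k : ℕ | ∃ s t : Fin k → ℕ,
      (∀ j, s j < t j) ∧ (∀ j j' : Fin k, j < j' → t j < s j') ∧
      (∀ j, t j ≤ N) ∧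
      (∀ j, u (s j) ω ≤ V (s j) ω) ∧ (∀ j, V (t j) ω ≤ l (t j) ω)}
      = upcrossingsBefore 0 b g (N + 1) ω := by
  set M := N + 1 with hM
  set S := {k : ℕ | ∃ s t : Fin k → ℕ,
      (∀ j, s j < t j) ∧ (∀ j j' : Fin k, j < j' → t j < s j') ∧
      (∀ j, t j ≤ N) ∧
      (∀ j, u (s j) ω ≤ V (s j) ω) ∧ (∀ j, V (t j) ω ≤ l (t j) ω)} with hS
  have h0S : (0 : ℕ) ∈ S := by
    refine ⟨Fin.elim0, Fin.elim0, fun j => j.elim0, fun j _ _ => j.elim0,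
      fun j => j.elim0, fun j => j.elim0, fun j => j.elim0⟩
  apply le_antisymm
  · -- every element of S is at most upcrossingsBefore
    refine csSup_le ⟨0, h0S⟩ ?_
    rintro k ⟨s, t, hst, hts, htN, hsu, htl⟩
    have hsN : ∀ j, s j ≤ N := fun j => le_of_lt (lt_of_lt_of_le (hst j) (htN j))
    have hgs : ∀ j : Fin k, g (s j) ω ∈ Set.Iic (0:ℝ) :=
      fun j => Set.mem_Iic.2 ((hgle _ ω (hsN j)).2 (hsu j))
    have hgt : ∀ j : Fin k, g (t j) ω ∈ Set.Ici b :=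
      fun j => Set.mem_Ici.2 ((hgge _ ω (htN j)).2 (htl j))
    have key : ∀ j : ℕ, ∀ hj : j < k, upperCrossingTime 0 b g M (j+1) ω ≤ t ⟨j, hj⟩ := by
      intro j
      induction j with
      | zero =>
        intro hj
        have h1 : lowerCrossingTime 0 b g M 0 ω ≤ s ⟨0, hj⟩ := by
          rw [lowerCrossingTime_zero]
          exact hittingBtwn_le_of_mem bot_le (le_trans (hsN _) (Nat.le_succ N)) (hgs _)
        rw [upperCrossingTime_succ_eq]
        exact hittingBtwn_le_of_mem (le_trans h1 (le_of_lt (hst _)))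
          (le_trans (htN _) (Nat.le_succ N)) (hgt _)
      | succ j ih =>
        intro hj
        have hj' : j < k := Nat.lt_of_succ_lt hj
        have h0 : upperCrossingTime 0 b g M (j+1) ω ≤ t ⟨j, hj'⟩ := ih hj'
        have hlt : t ⟨j, hj'⟩ < s ⟨j+1, hj⟩ :=
          hts _ _ (Fin.mk_lt_mk.2 (Nat.lt_succ_self j))
        have h1 : lowerCrossingTime 0 b g M (j+1) ω ≤ s ⟨j+1, hj⟩ := by
          show hittingBtwn g (Set.Iic 0) (upperCrossingTime 0 b g M (j+1) ω) M ω ≤ _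
          exact hittingBtwn_le_of_mem (le_trans h0 (le_of_lt hlt))
            (le_trans (hsN _) (Nat.le_succ N)) (hgs _)
        rw [upperCrossingTime_succ_eq]
        exact hittingBtwn_le_of_mem (le_trans h1 (le_of_lt (hst _)))
          (le_trans (htN _) (Nat.le_succ N)) (hgt _)
    rcases Nat.eq_zero_or_pos k with rfl | hk0
    · exact Nat.zero_le _
    have hkk : k - 1 < k := by omega
    have hUCT : upperCrossingTime 0 b g M k ω < M := by
      have := key (k-1) hkk
      have h2 := htN ⟨k-1, hkk⟩
      have : upperCrossingTime 0 b g M ((k-1)+1) ω ≤ N := le_trans this h2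
      have hk1 : (k-1)+1 = k := by omega
      rw [hk1] at this
      omega
    exact le_csSup (upperCrossingTime_lt_bddAbove hb) hUCT
  · -- upcrossingsBefore is in S
    have hbddS : BddAbove S := by
      refine ⟨N + 1, fun k hk => ?_⟩
      obtain ⟨s, t, hst, hts, htN, -, -⟩ := hk
      rcases Nat.eq_zero_or_pos k with rfl | hk0
      · exact Nat.zero_le _
      have hjt : ∀ j : ℕ, ∀ hj : j < k, j ≤ t ⟨j, hj⟩ := by
        intro j
        induction j with
        | zero => intro _; exact Nat.zero_le _
        | succ j ih =>
          intro hj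
          have hj' : j < k := Nat.lt_of_succ_lt hj
          have h1 := ih hj'
          have h2 : t ⟨j, hj'⟩ < s ⟨j+1, hj⟩ := hts _ _ (Fin.mk_lt_mk.2 (Nat.lt_succ_self j))
          have h3 : s ⟨j+1, hj⟩ < t ⟨j+1, hj⟩ := hst _
          omega
      have hkk : k - 1 < k := by omega
      have h4 := hjt (k-1) hkk
      have h5 := htN ⟨k-1, hkk⟩
      omega
    refine le_csSup hbddS ?_
    have hM0 : 0 < M := Nat.succ_pos N
    set c := upcrossingsBefore 0 b g M ω with hc
    have hUlt : ∀ j : Fin c, upperCrossingTime 0 b g M (j.val+1) ω < M :=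
      fun j => upperCrossingTime_lt_of_le_upcrossingsBefore hM0 hb j.isLt
    have hLlt : ∀ j : Fin c, lowerCrossingTime 0 b g M j.val ω < M :=
      fun j => lowerCrossingTime_lt_of_lt_upcrossingsBefore hM0 hb j.isLt
    have htN' : ∀ j : Fin c, upperCrossingTime 0 b g M (j.val+1) ω ≤ N :=
      fun j => Nat.lt_succ_iff.mp (hUlt j)
    have hstc : ∀ j : Fin c,
        lowerCrossingTime 0 b g M j.val ω < upperCrossingTime 0 b g M (j.val+1) ω :=
      fun j => lowerCrossingTime_lt_upperCrossingTime hb (hUlt j).ne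
    have hsN' : ∀ j : Fin c, lowerCrossingTime 0 b g M j.val ω ≤ N :=
      fun j => le_of_lt (lt_of_lt_of_le (hstc j) (htN' j))
    refine ⟨fun j => lowerCrossingTime 0 b g M j.val ω,
      fun j => upperCrossingTime 0 b g M (j.val+1) ω, hstc, ?_, htN', ?_, ?_⟩
    · intro j j' hjj'
      have hjj : j.val < j'.val := hjj'
      obtain ⟨mm, hmm⟩ : ∃ mm, j'.val = mm + 1 := ⟨j'.val - 1, by omega⟩
      have h1 : upperCrossingTime 0 b g M (j.val+1) ω ≤ upperCrossingTime 0 b g M j'.val ω :=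
        upperCrossingTime_mono (by omega)
      have h2 : upperCrossingTime 0 b g M j'.val ω < lowerCrossingTime 0 b g M j'.val ω := by
        rw [hmm]
        refine upperCrossingTime_lt_lowerCrossingTime hb ?_
        rw [← hmm]
        exact (hLlt j').ne
      exact lt_of_le_of_lt h1 h2
    · intro j
      refine (hgle _ ω (hsN' j)).1 ?_
      exact stoppedValue_lowerCrossingTime (hLlt j).ne
    · intro j
      refine (hgge _ ω (htN' j)).1 ?_
      exact stoppedValue_upperCrossingTime (hUlt j).ne

theorem aux_integral_estimate {Ω : Type*} {m : MeasurableSpace Ω}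
    (μ : Measure Ω) [IsProbabilityMeasure μ]
    (N : ℕ) (𝒢 : Filtration ℕ m)
    (V l u : ℕ → Ω → ℝ) (b : ℝ) (hb : 0 < b)
    (hVadapted : Adapted 𝒢 V) (hVint : ∀ i, Integrable (V i) μ)
    (hVsuper : ∀ i j : ℕ, i ≤ j → j ≤ N → μ[V j | 𝒢 i] ≤ᵐ[μ] V i)
    (hladapted : Adapted 𝒢 l) (hlint : ∀ i, Integrable (l i) μ)
    (hlmono : ∀ ω, ∀ i j : ℕ, i ≤ j → l j ω ≤ l i ω)
    (hl0 : ∀ ω, l 0 ω ≤ 0)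
    (hu : ∀ i ω, u i ω = l i ω + b)
    (D : Ω → ℕ)
    (hDeq : ∀ ω, (D ω : ℝ) =
      (upcrossingsBefore 0 b (fun i ω => max (l (min i N) ω + b - V (min i N) ω) 0) (N+1) ω : ℝ)) :
    b * ∫ ω, (D ω : ℝ) ∂μ ≤
      (∫ ω, (V 0 ω - V N ω) ∂μ) + ∫ ω, max (V N ω - u N ω) 0 ∂μ := by
  classical
  set M := N + 1 with hM
  set u' : ℕ → Ω → ℝ := fun i ω => l (min i N) ω + b with hu'def
  set V' : ℕ → Ω → ℝ := fun i ω => V (min i N) ω with hV'def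
  set g : ℕ → Ω → ℝ := fun i ω => max (u' i ω - V' i ω) 0 with hgdef
  set p : ℕ → Ω → ℝ := fun k ω => max (u' k ω - V' (k+1) ω) 0 with hpdef
  -- measurability and integrability
  have hu'meas : ∀ i, StronglyMeasurable[𝒢 i] (u' i) := by
    intro i
    rw [hu'def]
    exact (((hladapted (min i N)).mono (𝒢.mono (min_le_left i N)) le_rfl).add_const b).stronglyMeasurable
  have hV'meas : ∀ i, StronglyMeasurable[𝒢 i] (V' i) := by
    intro i
    rw [hV'def]
    exact ((hVadapted (min i N)).mono (𝒢.mono (min_le_left i N)) le_rfl).stronglyMeasurable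
  have hgadapted : Adapted 𝒢 g := by
    intro i
    rw [hgdef]
    have h1 : Measurable[𝒢 i] fun ω => u' i ω - V' i ω :=
      (hu'meas i).measurable.sub (hV'meas i).measurable
    have h2 : Measurable[𝒢 i] fun ω => max (u' i ω - V' i ω) 0 := h1.max measurable_const
    exact h2
  have hgmeas : ∀ i, StronglyMeasurable[𝒢 i] (g i) := fun i => (hgadapted i).stronglyMeasurable
  have hu'int : ∀ i, Integrable (u' i) μ := by
    intro i; rw [hu'def]; exact (hlint _).add (integrable_const b)
  have hV'int : ∀ i, Integrable (V' i) μ := by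
    intro i; rw [hV'def]; exact hVint _
  have hgint : ∀ i, Integrable (g i) μ := by
    intro i; rw [hgdef]; exact ((hu'int i).sub (hV'int i)).pos_part
  have hpint : ∀ k, Integrable (p k) μ := by
    intro k; rw [hpdef]; exact ((hu'int k).sub (hV'int (k+1))).pos_part
  have hKint : ∀ k, Integrable (fun ω => upcrossingStrat 0 b g M k ω * (g (k+1) ω - g k ω)) μ := by
    intro k
    refine Integrable.bdd_mul (c := 1) ((hgint (k+1)).sub (hgint k))
      (((hgadapted.stronglyAdapted.upcrossingStrat (N := M) (a := 0) (b := b) k).mono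
        (𝒢.le k)).aestronglyMeasurable) (Filter.Eventually.of_forall fun ω => ?_)
    rw [Real.norm_eq_abs, abs_of_nonneg upcrossingStrat_nonneg]
    exact upcrossingStrat_le_one
  -- the supermartingale ingredient for the extended process
  have hsuper' : ∀ k, k ≤ N → μ[V' (k+1)|𝒢 k] ≤ᵐ[μ] V' k := by
    intro k hk
    rcases eq_or_lt_of_le hk with rfl | hk'
    · have h1 : V' (k+1) = V' k := by
        funext ω
        simp only [hV'def]
        rw [min_eq_right (Nat.le_succ k), min_self]
      have h2 : μ[V' k|𝒢 k] = V' k :=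
        condExp_of_stronglyMeasurable (𝒢.le k) (hV'meas k) (hV'int k)
      rw [h1, h2]
    · have h1 : V' (k+1) = V (k+1) := by
        funext ω; simp only [hV'def]; rw [min_eq_left (by omega)]
      have h2 : V' k = V k := by
        funext ω; simp only [hV'def]; rw [min_eq_left (by omega)]
      rw [h1, h2]
      exact hVsuper k (k+1) (Nat.le_succ k) (by omega)
  -- conditional expectation bound : g k ≤ E[p k | 𝒢 k]
  have hcondp : ∀ k, k ≤ N → g k ≤ᵐ[μ] μ[p k|𝒢 k] := by
    intro k hk
    have e1 : μ[u' k - V' (k+1)|𝒢 k] ≤ᵐ[μ] μ[p k|𝒢 k] := by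
      refine condExp_mono ((hu'int k).sub (hV'int (k+1))) (hpint k)
        (Filter.Eventually.of_forall fun ω => ?_)
      simp only [hpdef, Pi.sub_apply]
      exact le_max_left _ _
    have e2 : μ[u' k - V' (k+1)|𝒢 k] =ᵐ[μ] u' k - μ[V' (k+1)|𝒢 k] := by
      have h3 := condExp_sub (m := 𝒢 k) (μ := μ) (hu'int k) (hV'int (k+1))
      rwa [condExp_of_stronglyMeasurable (𝒢.le k) (hu'meas k) (hu'int k)] at h3
    have e3 : 0 ≤ᵐ[μ] μ[p k|𝒢 k] := by
      refine condExp_nonneg (Filter.Eventually.of_forall fun ω => ?_)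
      simp only [hpdef, Pi.zero_apply]
      exact le_max_right _ _
    filter_upwards [e1, e2, e3, hsuper' k hk] with ω h1 h2 h3 h4
    have h5 : u' k ω - V' k ω ≤ (μ[p k|𝒢 k]) ω := by
      rw [h2] at h1
      simp only [Pi.sub_apply] at h1
      linarith
    simp only [hgdef]
    exact max_le h5 h3
  -- key per-step integral inequality
  have hkey : ∀ k, k ≤ N →
      ∫ ω, upcrossingStrat 0 b g M k ω * (g (k+1) ω - g k ω) ∂μ ≤
        ∫ ω, (p k ω - g k ω) ∂μ := by
    intro k hk
    have hqint : Integrable (fun ω => p k ω - g k ω) μ := (hpint k).sub (hgint k)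
    have hWmeas : StronglyMeasurable[𝒢 k] (fun ω => 1 - upcrossingStrat 0 b g M k ω) :=
      stronglyMeasurable_const.sub (hgadapted.stronglyAdapted.upcrossingStrat k)
    have hWq_int : Integrable (fun ω => (1 - upcrossingStrat 0 b g M k ω) * (p k ω - g k ω)) μ := by
      refine Integrable.bdd_mul (c := 1) hqint ((hWmeas.mono (𝒢.le k)).aestronglyMeasurable)
        (Filter.Eventually.of_forall fun ω => ?_)
      have hK1 : upcrossingStrat 0 b g M k ω ≤ 1 := upcrossingStrat_le_one
      have hK0 : (0:ℝ) ≤ upcrossingStrat 0 b g M k ω := upcrossingStrat_nonneg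
      rw [Real.norm_eq_abs, abs_of_nonneg (by linarith)]
      linarith
    have hmul : μ[(fun ω => 1 - upcrossingStrat 0 b g M k ω) * (fun ω => p k ω - g k ω)|𝒢 k]
        =ᵐ[μ] (fun ω => 1 - upcrossingStrat 0 b g M k ω) * μ[fun ω => p k ω - g k ω|𝒢 k] :=
      condExp_mul_of_stronglyMeasurable_left hWmeas hWq_int hqint
    have hcondq : 0 ≤ᵐ[μ] μ[fun ω => p k ω - g k ω|𝒢 k] := by
      have h3 : μ[p k - g k|𝒢 k] =ᵐ[μ] μ[p k|𝒢 k] - μ[g k|𝒢 k] :=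
        condExp_sub (hpint k) (hgint k) _
      have h4 : μ[g k|𝒢 k] = g k :=
        condExp_of_stronglyMeasurable (𝒢.le k) (hgmeas k) (hgint k)
      rw [h4] at h3
      filter_upwards [h3, hcondp k hk] with ω h5 h6
      have h7 : (μ[p k - g k|𝒢 k]) ω = (μ[p k|𝒢 k]) ω - g k ω := by
        rw [h5]; simp [Pi.sub_apply]
      simp only [Pi.zero_apply]
      calc (0:ℝ) ≤ (μ[p k|𝒢 k]) ω - g k ω := by linarith
        _ = (μ[p k - g k|𝒢 k]) ω := h7.symm
        _ = (μ[fun ω => p k ω - g k ω|𝒢 k]) ω := rfl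
    have hpos : 0 ≤ ∫ ω, (1 - upcrossingStrat 0 b g M k ω) * (p k ω - g k ω) ∂μ := by
      have h8 := integral_condExp (m := 𝒢 k) (μ := μ)
        (f := fun ω => (1 - upcrossingStrat 0 b g M k ω) * (p k ω - g k ω)) (𝒢.le k)
      rw [← h8]
      refine integral_nonneg_of_ae ?_
      filter_upwards [hmul, hcondq] with ω h1 h2
      have h1' : (μ[fun ω => (1 - upcrossingStrat 0 b g M k ω) * (p k ω - g k ω)|𝒢 k]) ω
          = (1 - upcrossingStrat 0 b g M k ω) * (μ[fun ω => p k ω - g k ω|𝒢 k]) ω := h1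
      rw [h1']
      have hK1 : upcrossingStrat 0 b g M k ω ≤ 1 := upcrossingStrat_le_one
      exact mul_nonneg (by linarith) h2
    have hsplit : ∫ ω, upcrossingStrat 0 b g M k ω * (p k ω - g k ω) ∂μ
        = (∫ ω, (p k ω - g k ω) ∂μ) - ∫ ω, (1 - upcrossingStrat 0 b g M k ω) * (p k ω - g k ω) ∂μ := by
      rw [← integral_sub hqint hWq_int]
      congr 1
      funext ω
      ring
    have hKq_int : Integrable (fun ω => upcrossingStrat 0 b g M k ω * (p k ω - g k ω)) μ := by
      refine Integrable.bdd_mul (c := 1) hqint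
        (((hgadapted.stronglyAdapted.upcrossingStrat (N := M) (a := 0) (b := b) k).mono
          (𝒢.le k)).aestronglyMeasurable) (Filter.Eventually.of_forall fun ω => ?_)
      rw [Real.norm_eq_abs, abs_of_nonneg upcrossingStrat_nonneg]
      exact upcrossingStrat_le_one
    have hstep : ∫ ω, upcrossingStrat 0 b g M k ω * (g (k+1) ω - g k ω) ∂μ ≤
        ∫ ω, upcrossingStrat 0 b g M k ω * (p k ω - g k ω) ∂μ := by
      refine integral_mono (hKint k) hKq_int fun ω => ?_
      refine mul_le_mul_of_nonneg_left ?_ upcrossingStrat_nonneg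
      have hgp : g (k+1) ω ≤ p k ω := by
        simp only [hgdef, hpdef]
        refine max_le (le_max_of_le_left ?_) (le_max_right _ _)
        have : u' (k+1) ω ≤ u' k ω := by
          simp only [hu'def]
          have := hlmono ω (min k N) (min (k+1) N) (by omega)
          linarith
        linarith
      linarith
    calc ∫ ω, upcrossingStrat 0 b g M k ω * (g (k+1) ω - g k ω) ∂μ
        ≤ ∫ ω, upcrossingStrat 0 b g M k ω * (p k ω - g k ω) ∂μ := hstep
      _ = (∫ ω, (p k ω - g k ω) ∂μ)
          - ∫ ω, (1 - upcrossingStrat 0 b g M k ω) * (p k ω - g k ω) ∂μ := hsplit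
      _ ≤ ∫ ω, (p k ω - g k ω) ∂μ := by linarith
  -- pathwise upcrossing inequality, integrated
  have hmain : b * ∫ ω, (D ω : ℝ) ∂μ ≤
      ∑ k ∈ Finset.range M, ∫ ω, upcrossingStrat 0 b g M k ω * (g (k+1) ω - g k ω) ∂μ := by
    have hDg : ∀ ω, (D ω : ℝ) = (upcrossingsBefore 0 b g M ω : ℝ) := hDeq
    rw [← integral_const_mul]
    rw [← integral_finset_sum _ fun k _ => hKint k]
    refine integral_mono_of_nonneg (Filter.Eventually.of_forall fun ω => ?_)
      (integrable_finset_sum _ fun k _ => hKint k) (Filter.Eventually.of_forall fun ω => ?_)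
    · exact mul_nonneg hb.le (Nat.cast_nonneg _)
    · show b * (D ω : ℝ) ≤ ∑ i ∈ Finset.range M, upcrossingStrat 0 b g M i ω * (g (i+1) ω - g i ω)
      rw [hDg ω]
      have h0g : (0:ℝ) ≤ g M ω := by rw [hgdef]; exact le_max_right _ _
      have := mul_upcrossingsBefore_le (f := g) (N := M) (ω := ω) h0g hb
      simpa using this
  -- final assembly
  have hsum : ∑ k ∈ Finset.range M, ∫ ω, upcrossingStrat 0 b g M k ω * (g (k+1) ω - g k ω) ∂μ ≤
      ∑ k ∈ Finset.range M, ∫ ω, (p k ω - g k ω) ∂μ := by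
    refine Finset.sum_le_sum fun k hk => hkey k ?_
    rw [Finset.mem_range] at hk
    omega
  have huNint : Integrable (u N) μ :=
    ((hlint N).add (integrable_const b)).congr
      (Filter.Eventually.of_forall fun ω => (hu N ω).symm)
  have hf1 : Integrable (fun ω => V 0 ω - V N ω) μ := (hVint 0).sub (hVint N)
  have hf2 : Integrable (fun ω => max (V N ω - u N ω) 0) μ := ((hVint N).sub huNint).pos_part
  have hf3 : Integrable (fun ω => (V 0 ω - V N ω) + max (V N ω - u N ω) 0) μ := hf1.add hf2
  have hfinal : ∑ k ∈ Finset.range M, ∫ ω, (p k ω - g k ω) ∂μ ≤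
      (∫ ω, (V 0 ω - V N ω) ∂μ) + ∫ ω, max (V N ω - u N ω) 0 ∂μ := by
    rw [← integral_finset_sum (f := fun k ω => p k ω - g k ω) _
      fun k _ => (hpint k).sub (hgint k)]
    rw [← integral_add hf1 hf2]
    refine integral_mono (integrable_finset_sum _ fun k _ => (hpint k).sub (hgint k)) hf3 ?_
    intro ω
    show ∑ k ∈ Finset.range M, (p k ω - g k ω) ≤ V 0 ω - V N ω + max (V N ω - u N ω) 0
    have htel : ∑ k ∈ Finset.range M, (p k ω - g k ω) ≤
        (g M ω - g 0 ω) + (u' 0 ω - u' M ω) := by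
      have hterm : ∀ k, p k ω - g k ω ≤ (g (k+1) ω - g k ω) + (u' k ω - u' (k+1) ω) := by
        intro k
        have hle : p k ω ≤ g (k+1) ω + (u' k ω - u' (k+1) ω) := by
          simp only [hgdef, hpdef]
          have hud : u' (k+1) ω ≤ u' k ω := by
            simp only [hu'def]
            have := hlmono ω (min k N) (min (k+1) N) (by omega)
            linarith
          refine max_le ?_ ?_
          · have := le_max_left (u' (k+1) ω - V' (k+1) ω) 0
            linarith
          · have := le_max_right (u' (k+1) ω - V' (k+1) ω) 0
            linarith
        linarith
      calc ∑ k ∈ Finset.range M, (p k ω - g k ω)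
          ≤ ∑ k ∈ Finset.range M, ((g (k+1) ω - g k ω) + (u' k ω - u' (k+1) ω)) :=
            Finset.sum_le_sum fun k _ => hterm k
        _ = (g M ω - g 0 ω) + (u' 0 ω - u' M ω) := by
            rw [Finset.sum_add_distrib, Finset.sum_range_sub (fun k => g k ω),
              Finset.sum_range_sub' (fun k => u' k ω)]
    refine le_trans htel ?_
    have hgM : g M ω = max (u N ω - V N ω) 0 := by
      simp only [hgdef, hu'def, hV'def, hM]
      rw [min_eq_right (Nat.le_succ N), hu]
    have hg0 : g 0 ω = max (u 0 ω - V 0 ω) 0 := by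
      simp only [hgdef, hu'def, hV'def]
      rw [min_eq_left (Nat.zero_le N), hu]
    have hu'M : u' M ω = u N ω := by
      simp only [hu'def, hM]
      rw [min_eq_right (Nat.le_succ N), hu]
    have hu'0 : u' 0 ω = u 0 ω := by
      simp only [hu'def]
      rw [min_eq_left (Nat.zero_le N), hu]
    rw [hgM, hg0, hu'M, hu'0]
    have hid : max (u N ω - V N ω) 0 = max (V N ω - u N ω) 0 + (u N ω - V N ω) := by
      rcases le_total (u N ω - V N ω) 0 with h | h
      · rw [max_eq_right h, max_eq_left (by linarith)]; ring
      · rw [max_eq_left h, max_eq_right (by linarith)]; ring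
    have h2 : u 0 ω - V 0 ω ≤ max (u 0 ω - V 0 ω) 0 := le_max_left _ _
    linarith
  calc b * ∫ ω, (D ω : ℝ) ∂μ
      ≤ ∑ k ∈ Finset.range M, ∫ ω, upcrossingStrat 0 b g M k ω * (g (k+1) ω - g k ω) ∂μ := hmain
    _ ≤ ∑ k ∈ Finset.range M, ∫ ω, (p k ω - g k ω) ∂μ := hsum
    _ ≤ (∫ ω, (V 0 ω - V N ω) ∂μ) + ∫ ω, max (V N ω - u N ω) 0 ∂μ := hfinal

/-- Doob-type downcrossing estimate with a moving (nonincreasing) lower barrier: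
`b · E[D] ≤ E[V₀ − V_N] + E[(V_N − u_N)⁺]`. -/
theorem downcrossing_estimate_moving_barriers {Ω : Type*} {m : MeasurableSpace Ω}
    (μ : Measure Ω) [IsProbabilityMeasure μ]
    (N : ℕ) (𝒢 : Filtration ℕ m)
    (V l u : ℕ → Ω → ℝ) (b : ℝ) (hb : 0 < b)
    (hVadapted : Adapted 𝒢 V) (hVint : ∀ i, Integrable (V i) μ)
    (hVsuper : ∀ i j : ℕ, i ≤ j → j ≤ N → μ[V j | 𝒢 i] ≤ᵐ[μ] V i)
    (hladapted : Adapted 𝒢 l) (hlint : ∀ i, Integrable (l i) μ)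
    (hlmono : ∀ ω, ∀ i j : ℕ, i ≤ j → l j ω ≤ l i ω)
    (hl0 : ∀ ω, l 0 ω ≤ 0)
    (hu : ∀ i ω, u i ω = l i ω + b)
    (D : Ω → ℕ)
    (hD : ∀ ω, D ω = sSup {k : ℕ | ∃ s t : Fin k → ℕ,
      (∀ j, s j < t j) ∧ (∀ j j' : Fin k, j < j' → t j < s j') ∧
      (∀ j, t j ≤ N) ∧
      (∀ j, u (s j) ω ≤ V (s j) ω) ∧ (∀ j, V (t j) ω ≤ l (t j) ω)}) :
    b * ∫ ω, (D ω : ℝ) ∂μ ≤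
      (∫ ω, (V 0 ω - V N ω) ∂μ) + ∫ ω, max (V N ω - u N ω) 0 ∂μ := by
  set g : ℕ → Ω → ℝ := fun i ω => max (l (min i N) ω + b - V (min i N) ω) 0 with hgdef
  have hgle : ∀ i ω, i ≤ N → (g i ω ≤ 0 ↔ u i ω ≤ V i ω) := by
    intro i ω hiN
    have hgi : g i ω = max (l i ω + b - V i ω) 0 := by
      simp only [hgdef, min_eq_left hiN]
    rw [hgi]
    constructor
    · intro h
      have h1 := le_trans (le_max_left (l i ω + b - V i ω) 0) h
      have h2 := hu i ω
      linarith
    · intro h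
      have h2 := hu i ω
      exact max_le (by linarith) le_rfl
  have hgge : ∀ i ω, i ≤ N → (b ≤ g i ω ↔ V i ω ≤ l i ω) := by
    intro i ω hiN
    have hgi : g i ω = max (l i ω + b - V i ω) 0 := by
      simp only [hgdef, min_eq_left hiN]
    rw [hgi]
    constructor
    · intro h
      rcases le_max_iff.1 h with h1 | h1
      · linarith
      · linarith
    · intro h
      exact le_max_of_le_left (by linarith)
  have hDeq : ∀ ω, (D ω : ℝ) =
      (upcrossingsBefore 0 b (fun i ω => max (l (min i N) ω + b - V (min i N) ω) 0) (N+1) ω : ℝ) := by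
    intro ω
    rw [hD ω]
    norm_cast
    exact aux_D_eq_ucb N g b hb V l u hgle hgge ω
  exact aux_integral_estimate μ N 𝒢 V l u b hb hVadapted hVint hVsuper hladapted hlint
    hlmono hl0 hu D hDeq
end
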